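/- arXiv:2105.13913 — 3 statements merged into one kernel-verified Lean document; each statement's English description precedes it below -/
import Mathlib

section
/- Let (h_t) be a sequence of nonnegative reals, let C > 0 and T₀ a natural number. Suppose h_{T₀} ≤ 4(T₀+1)/(T₀+1) · C (i.e., h_{T₀} ≤ 4C·(T₀+1)/(T₀+1)), and for every t ≥ T₀ either h_{t+1} ≤ (1 - 2/(t+2))·h_t + (2/(t+2))²·C, or h_{t+1} ≤ h_t ≤ (2/(t+2))·C. Then for all t ≥ T₀, h_t ≤ 4(T₀+1)·C/(t+1). -/
theorem primal_gap_induction (h : ℕ → ℝ) (C : ℝ) (T₀ : ℕ)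
    (hnonneg : ∀ t, 0 ≤ h t) (hC : 0 < C)
    (hinit : h T₀ ≤ 4 * ((T₀ : ℝ) + 1) / ((T₀ : ℝ) + 1) * C)
    (hstep : ∀ t, T₀ ≤ t →
      (h (t + 1) ≤ (1 - 2 / ((t : ℝ) + 2)) * h t + (2 / ((t : ℝ) + 2)) ^ 2 * C) ∨
      (h (t + 1) ≤ h t ∧ h t ≤ 2 / ((t : ℝ) + 2) * C)) :
    ∀ t, T₀ ≤ t → h t ≤ 4 * ((T₀ : ℝ) + 1) * C / ((t : ℝ) + 1) := by
  intro t ht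
  induction t, ht using Nat.le_induction with
  | base =>
    have h1 : 4*((T₀:ℝ)+1)/((T₀:ℝ)+1)*C = 4*((T₀:ℝ)+1)*C/((T₀:ℝ)+1) := by ring
    linarith [hinit]
  | succ n hn ih =>
    have hx1 : (0:ℝ) < (n:ℝ)+1 := by positivity
    have hx2 : (0:ℝ) < (n:ℝ)+2 := by positivity
    have hT : (0:ℝ) ≤ (T₀:ℝ) := Nat.cast_nonneg _
    have hA : 4*C ≤ 4*((T₀:ℝ)+1)*C := by nlinarith
    have hgoal : ((n+1:ℕ):ℝ) + 1 = (n:ℝ) + 2 := by push_cast; ring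
    rw [hgoal]
    rcases hstep n hn with h1 | ⟨h1, h2⟩
    · have hcoef : (0:ℝ) ≤ 1 - 2/((n:ℝ)+2) := by
        rw [sub_nonneg, div_le_one hx2]; linarith
      have hb : h (n+1) ≤ (1 - 2/((n:ℝ)+2)) * (4*((T₀:ℝ)+1)*C/((n:ℝ)+1))
          + (2/((n:ℝ)+2))^2 * C := by
        have := mul_le_mul_of_nonneg_left ih hcoef
        linarith
      have keyeq : 4*((T₀:ℝ)+1)*C/((n:ℝ)+2)
          - ((1 - 2/((n:ℝ)+2)) * (4*((T₀:ℝ)+1)*C/((n:ℝ)+1)) + (2/((n:ℝ)+2))^2 * C)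
          = (4*((T₀:ℝ)+1)*C*((n:ℝ)+2) - 4*C*((n:ℝ)+1)) / (((n:ℝ)+1)*((n:ℝ)+2)^2) := by
        field_simp
        ring
      have hnum : (0:ℝ) ≤ 4*((T₀:ℝ)+1)*C*((n:ℝ)+2) - 4*C*((n:ℝ)+1) := by nlinarith
      have hden : (0:ℝ) < ((n:ℝ)+1)*((n:ℝ)+2)^2 := by positivity
      have hkey : (0:ℝ) ≤ 4*((T₀:ℝ)+1)*C/((n:ℝ)+2)
          - ((1 - 2/((n:ℝ)+2)) * (4*((T₀:ℝ)+1)*C/((n:ℝ)+1)) + (2/((n:ℝ)+2))^2 * C) := by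
        rw [keyeq]; positivity
      linarith
    · have h3 : 2/((n:ℝ)+2) * C ≤ 4*((T₀:ℝ)+1)*C/((n:ℝ)+2) := by
        rw [div_mul_eq_mul_div, div_le_div_iff₀ hx2 hx2]
        nlinarith
      linarith
end

section
/- Let X ⊆ ℝⁿ be a (κ, q)-uniformly convex compact set, f differentiable at x ∈ X, and v ∈ argmin_{u∈X} ⟨∇f(x), u⟩ with v ≠ x. Then ⟨∇f(x), x - v⟩ ≥ κ·‖∇f(x)‖·‖x - v‖^q. -/
open scoped RealInnerProductSpace

theorem uniformly_convex_scaling {n : ℕ} (f : EuclideanSpace ℝ (Fin n) → ℝ)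
    (X : Set (EuclideanSpace ℝ (Fin n))) (x v : EuclideanSpace ℝ (Fin n))
    (κ q : ℝ) (hκ : 0 < κ) (hq : 0 < q)
    (hX : IsCompact X)
    (hunif : ∀ a ∈ X, ∀ b ∈ X, ∀ γ : ℝ, 0 ≤ γ → γ ≤ 1 →
      ∀ z : EuclideanSpace ℝ (Fin n), ‖z‖ = 1 →
        b + γ • (a - b) + (γ * (1 - γ) * κ * ‖a - b‖ ^ q) • z ∈ X)
    (hx : x ∈ X) (hf : DifferentiableAt ℝ f x)
    (hv : v ∈ X ∧ ∀ u ∈ X, ⟪gradient f x, v⟫ ≤ ⟪gradient f x, u⟫)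
    (hvx : v ≠ x) :
    κ * ‖gradient f x‖ * ‖x - v‖ ^ q ≤ ⟪gradient f x, x - v⟫ := by
  set g := gradient f x with hg
  by_cases hg0 : g = 0
  · simp [hg0]
  have hgn : (0:ℝ) < ‖g‖ := norm_pos_iff.mpr hg0
  have hxv : (0:ℝ) < ‖x - v‖ := by
    rw [norm_pos_iff, sub_ne_zero]; exact fun h => hvx h.symm
  set C : ℝ := κ * ‖g‖ * ‖x - v‖ ^ q with hC
  have hCpos : 0 < C := by positivity
  have key : ∀ γ : ℝ, 0 < γ → γ ≤ 1 → (1 - γ) * C ≤ ⟪g, x - v⟫ := by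
    intro γ hγ0 hγ1
    set z : EuclideanSpace ℝ (Fin n) := -(‖g‖⁻¹ • g) with hz
    have hzn : ‖z‖ = 1 := by
      rw [hz, norm_neg, norm_smul, norm_inv, norm_norm]
      field_simp
    have hp := hunif x hx v hv.1 γ hγ0.le hγ1 z hzn
    have h2 := hv.2 _ hp
    have hip : ⟪g, v + γ • (x - v) + (γ * (1 - γ) * κ * ‖x - v‖ ^ q) • z⟫
        = ⟪g, v⟫ + γ * ⟪g, x - v⟫ - (γ * (1 - γ) * κ * ‖x - v‖ ^ q) * ‖g‖ := by
      rw [inner_add_right, inner_add_right, real_inner_smul_right, real_inner_smul_right]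
      have : ⟪g, z⟫ = -‖g‖ := by
        rw [hz, inner_neg_right, real_inner_smul_right, real_inner_self_eq_norm_sq]
        field_simp
      rw [this]; ring
    rw [hip] at h2
    have h3 : γ * ((1 - γ) * C) ≤ γ * ⟪g, x - v⟫ := by
      rw [hC]; nlinarith
    exact le_of_mul_le_mul_left h3 hγ0
  refine le_of_forall_pos_le_add fun ε hε => ?_
  set γ : ℝ := min 1 (ε / C) with hγ
  have hγ0 : 0 < γ := lt_min one_pos (div_pos hε hCpos)
  have hγ1 : γ ≤ 1 := min_le_left _ _
  have h := key γ hγ0 hγ1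
  have hγC : γ * C ≤ ε := by
    calc γ * C ≤ (ε / C) * C := by
          exact mul_le_mul_of_nonneg_right (min_le_right _ _) hCpos.le
    _ = ε := by field_simp
  nlinarith
end

section
/- Let (h_t) be nonnegative reals and (g_t) nonnegative reals with g_t ≥ h_t for all t. Suppose for indices t_min ≤ t ≤ t_max: h_{t+1} ≤ h_t - (2/(t+2))·g_t + (2/(t+2))²·C for a constant C ≥ 0. If min_{t_min ≤ t ≤ t_max} g_t > (h(t_min) + 4C·(t_max - t_min + 1)/(t_min+2)²) · (t_max+2)/(2(t_max - t_min + 1)), then h_{t_max+1} < 0, a contradiction; hence min_{t_min ≤ t ≤ t_max} g_t ≤ (h_{t_min} + 4C·(t_max - t_min+1)/(t_min+2)²)·(t_max+2)/(2(t_max - t_min+1)). -/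
theorem min_fw_gap_bound (h g : ℕ → ℝ) (C : ℝ) (tmin tmax : ℕ)
    (hC : 0 ≤ C) (htm : tmin ≤ tmax)
    (hnonneg : ∀ t, 0 ≤ h t) (hgnonneg : ∀ t, 0 ≤ g t)
    (hgh : ∀ t, h t ≤ g t)
    (hstep : ∀ t, tmin ≤ t → t ≤ tmax →
      h (t + 1) ≤ h t - 2 / ((t : ℝ) + 2) * g t + (2 / ((t : ℝ) + 2)) ^ 2 * C) :
    ∃ t, tmin ≤ t ∧ t ≤ tmax ∧
      g t ≤ (h tmin + 4 * C * ((tmax : ℝ) - (tmin : ℝ) + 1) / ((tmin : ℝ) + 2) ^ 2) *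
        ((tmax : ℝ) + 2) / (2 * ((tmax : ℝ) - (tmin : ℝ) + 1)) := by
  by_contra hcon
  push_neg at hcon
  set B : ℝ := (h tmin + 4 * C * ((tmax : ℝ) - (tmin : ℝ) + 1) / ((tmin : ℝ) + 2) ^ 2) *
        ((tmax : ℝ) + 2) / (2 * ((tmax : ℝ) - (tmin : ℝ) + 1)) with hBdef
  set N : ℕ := tmax - tmin + 1 with hNdef
  have hNcast : (N : ℝ) = (tmax : ℝ) - (tmin : ℝ) + 1 := by
    have h1 : ((tmax - tmin : ℕ) : ℝ) = (tmax : ℝ) - (tmin : ℝ) := Nat.cast_sub htm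
    rw [hNdef]; push_cast [h1]; ring
  have hNpos : (0:ℝ) < (tmax : ℝ) - (tmin : ℝ) + 1 := by
    rw [← hNcast]; positivity
  have htmax2 : (0:ℝ) < (tmax : ℝ) + 2 := by positivity
  have htmin2 : (0:ℝ) < (tmin : ℝ) + 2 := by positivity
  have hB : 0 ≤ B := by
    rw [hBdef]
    have h1 : 0 ≤ h tmin := hnonneg tmin
    positivity
  -- key inductive claim
  have claim : ∀ k, 1 ≤ k → k ≤ N →
      h (tmin + k) < h tmin - (k : ℝ) * (2 / ((tmax:ℝ) + 2) * B)
        + (k : ℝ) * (4 / ((tmin:ℝ) + 2) ^ 2 * C) := by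
    intro k
    induction k with
    | zero => omega
    | succ n ih =>
      intro _ hle
      have hn_le : tmin + n ≤ tmax := by omega
      have hstep' := hstep (tmin + n) (by omega) hn_le
      have ht2pos : (0:ℝ) < ((tmin + n : ℕ) : ℝ) + 2 := by positivity
      have hgB : B < g (tmin + n) := hcon (tmin + n) (by omega) hn_le
      -- bound the two per-step terms
      have hterm1 : 2 / ((tmax:ℝ) + 2) * B < 2 / (((tmin + n : ℕ) : ℝ) + 2) * g (tmin + n) := by
        have hle2 : 2 / ((tmax:ℝ) + 2) ≤ 2 / (((tmin + n : ℕ) : ℝ) + 2) := by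
          apply div_le_div_of_nonneg_left (by norm_num) ht2pos
          have : ((tmin + n : ℕ) : ℝ) ≤ (tmax : ℝ) := Nat.cast_le.mpr hn_le
          linarith
        calc 2 / ((tmax:ℝ) + 2) * B ≤ 2 / (((tmin + n : ℕ) : ℝ) + 2) * B :=
              mul_le_mul_of_nonneg_right hle2 hB
          _ < 2 / (((tmin + n : ℕ) : ℝ) + 2) * g (tmin + n) := by
              apply mul_lt_mul_of_pos_left hgB; positivity
      have hterm2 : (2 / (((tmin + n : ℕ) : ℝ) + 2)) ^ 2 * C ≤ 4 / ((tmin:ℝ) + 2) ^ 2 * C := by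
        apply mul_le_mul_of_nonneg_right _ hC
        have h1 : ((tmin : ℝ) + 2) ≤ (((tmin + n : ℕ) : ℝ) + 2) := by push_cast; linarith
        rw [div_pow, div_le_div_iff₀ (by positivity) (by positivity)]
        nlinarith
      have hprev : h (tmin + n) ≤ h tmin - (n:ℝ) * (2 / ((tmax:ℝ) + 2) * B)
          + (n:ℝ) * (4 / ((tmin:ℝ) + 2) ^ 2 * C) := by
        rcases Nat.eq_zero_or_pos n with h0 | h0
        · subst h0; norm_num
        · exact le_of_lt (ih h0 (by omega))
      have hstep2 : h (tmin + (n + 1)) ≤ h (tmin + n)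
          - 2 / (((tmin + n : ℕ) : ℝ) + 2) * g (tmin + n)
          + (2 / (((tmin + n : ℕ) : ℝ) + 2)) ^ 2 * C := by
        have e : tmin + (n + 1) = tmin + n + 1 := by omega
        rw [e]; exact hstep'
      push_cast
      push_cast at hprev hterm1 hterm2 hstep2
      linarith
  have hfinal := claim N (by omega) le_rfl
  have hNmax : tmin + N = tmax + 1 := by omega
  rw [hNmax] at hfinal
  have h0 : 0 ≤ h (tmax + 1) := hnonneg _
  -- B * (2N/(tmax+2)) = h tmin + 4CN/(tmin+2)^2
  have hkey : (N:ℝ) * (2 / ((tmax:ℝ) + 2) * B) =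
      h tmin + (N:ℝ) * (4 / ((tmin:ℝ) + 2) ^ 2 * C) := by
    rw [hBdef, hNcast]
    field_simp
  linarith
end
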